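/- arXiv:2107.04809 — 4 statements merged into one kernel-verified Lean document; each statement's English description precedes it below -/
import Mathlib

section
/- For |q|<1, ∑_{k∈ℤ} q^{k(2k+1)} = (q^2;q^2)_∞^2 / (q;q)_∞, where (a;q)_∞ = ∏_{k≥0}(1-aq^k). -/
/-!
Cauchy's `q`-binomial theorem `∏_{j<N} (1 + t p^j) = ∑_k p^(k choose 2) [N k]_p t^k`, applied with
`N = 2n`, `p = q²`, `t = z⁻¹ q^(1-2n)`, gives the finite Jacobi triple product
`(-zq; q²)_n (-z⁻¹q; q²)_n = ∑_{|l| ≤ n} [2n, n-l]_{q²} z^l q^(l²)`. The Gaussian binomials are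
uniformly bounded and `[m+k, k]_p → 1/(p;p)_∞` as `m, k → ∞`, so dominated convergence yields
`∑_l z^l q^(l²) = (q²;q²)_∞ (-zq;q²)_∞ (-z⁻¹q;q²)_∞`. Replacing `q` by `q²` and taking `z = q`
gives `∑_k q^(k(2k+1)) = (q⁴;q⁴)_∞ (-q;q²)_∞`, and the identities `(a;p) = (a;p²)(ap;p²)` and
`(a;p)(-a;p) = (a²;p²)` turn the right-hand side into `(q²;q²)_∞² / (q;q)_∞`.
-/

open Finset Filter Topology

section Algebraic

variable {R : Type*} [CommRing R]

/-- The Gaussian binomial coefficient `[n k]_p`, through the `q`-Pascal rule. -/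
def qBinomial (p : R) : ℕ → ℕ → R
  | _, 0 => 1
  | 0, _ + 1 => 0
  | n + 1, k + 1 => qBinomial p n k + p ^ (k + 1) * qBinomial p n (k + 1)

@[simp] lemma qBinomial_zero_right (p : R) (n : ℕ) : qBinomial p n 0 = 1 := by
  cases n <;> rfl

lemma qBinomial_succ_succ (p : R) (n k : ℕ) :
    qBinomial p (n + 1) (k + 1) = qBinomial p n k + p ^ (k + 1) * qBinomial p n (k + 1) :=
  rfl

lemma qBinomial_eq_zero_of_lt (p : R) {n k : ℕ} (h : n < k) : qBinomial p n k = 0 := by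
  obtain ⟨k, rfl⟩ := Nat.exists_eq_add_one_of_ne_zero (by omega : k ≠ 0)
  induction n generalizing k with
  | zero => rfl
  | succ n ih =>
    obtain ⟨k, rfl⟩ := Nat.exists_eq_add_one_of_ne_zero (by omega : k ≠ 0)
    rw [qBinomial_succ_succ, ih _ (by omega), ih _ (by omega), mul_zero, add_zero]

@[simp] lemma qBinomial_self (p : R) (n : ℕ) : qBinomial p n n = 1 := by
  induction n with
  | zero => rfl
  | succ n ih => rw [qBinomial_succ_succ, ih, qBinomial_eq_zero_of_lt p n.lt_succ_self, mul_zero,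
      add_zero]

/-- Cauchy's `q`-binomial theorem. -/
theorem prod_range_one_add_mul_pow (p t : R) (N : ℕ) :
    ∏ j ∈ range N, (1 + t * p ^ j) =
      ∑ k ∈ range (N + 1), p ^ k.choose 2 * qBinomial p N k * t ^ k := by
  induction N generalizing t with
  | zero => simp
  | succ N ih =>
    have hshift : ∏ j ∈ range N, (1 + t * p ^ (j + 1)) = ∏ j ∈ range N, (1 + t * p * p ^ j) := by
      simp only [pow_succ', mul_assoc]
    have hlow : (∑ k ∈ range (N + 1), p ^ k.choose 2 * qBinomial p N k * (t * p) ^ k) * t =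
        ∑ k ∈ range (N + 1), p ^ (k + 1).choose 2 * qBinomial p N k * t ^ (k + 1) := by
      rw [sum_mul]
      refine sum_congr rfl fun k _ => ?_
      rw [Nat.choose_succ_succ', Nat.choose_one_right]
      ring
    have hhigh : ∑ k ∈ range (N + 1), p ^ k.choose 2 * qBinomial p N k * (t * p) ^ k =
        ∑ k ∈ range (N + 1), p ^ (k + 1).choose 2 * (p ^ (k + 1) * qBinomial p N (k + 1)) *
          t ^ (k + 1) + 1 := by
      rw [sum_range_succ', sum_range_succ _ N, qBinomial_eq_zero_of_lt p N.lt_succ_self]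
      simp only [mul_zero, zero_mul, add_zero, Nat.choose_zero_succ, pow_zero,
        qBinomial_zero_right, mul_one]
      exact congrArg (· + 1) (sum_congr rfl fun k _ => by ring)
    rw [prod_range_succ', hshift, ih, sum_range_succ' _ (N + 1)]
    have hpascal : ∑ k ∈ range (N + 1), p ^ (k + 1).choose 2 * qBinomial p (N + 1) (k + 1) *
        t ^ (k + 1) = ∑ k ∈ range (N + 1), p ^ (k + 1).choose 2 * qBinomial p N k * t ^ (k + 1) +
          ∑ k ∈ range (N + 1), p ^ (k + 1).choose 2 * (p ^ (k + 1) * qBinomial p N (k + 1)) *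
            t ^ (k + 1) := by
      rw [← sum_add_distrib]
      exact sum_congr rfl fun k _ => by rw [qBinomial_succ_succ]; ring
    rw [hpascal, ← hlow, qBinomial_zero_right, Nat.choose_zero_succ]
    linear_combination hhigh

/-- `(a;p)_n`. -/
def qPochhammer (a p : R) (n : ℕ) : R := ∏ j ∈ range n, (1 - a * p ^ j)

@[simp] lemma qPochhammer_zero (a p : R) : qPochhammer a p 0 = 1 := prod_range_zero _

lemma qPochhammer_succ (a p : R) (n : ℕ) :
    qPochhammer a p (n + 1) = qPochhammer a p n * (1 - a * p ^ n) :=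
  prod_range_succ _ _

theorem qBinomial_mul_qPochhammer_mul_qPochhammer (p : R) (m k : ℕ) :
    qBinomial p (m + k) k * qPochhammer p p k * qPochhammer p p m = qPochhammer p p (m + k) := by
  induction m generalizing k with
  | zero => simp
  | succ m ihm =>
    induction k with
    | zero => simp
    | succ k ihk =>
      have hk := ihm (k + 1)
      rw [show m + (k + 1) = m + 1 + k by omega] at hk
      rw [show m + 1 + (k + 1) = m + 1 + k + 1 by omega, qBinomial_succ_succ]
      simp only [qPochhammer_succ] at hk ihk ⊢
      linear_combination (1 - p * p ^ k) * ihk + p ^ (k + 1) * (1 - p * p ^ m) * hk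

end Algebraic

section Analytic

variable {K : Type*} [NormedField K] {a p : K}

lemma mul_pow_ne_one_of_norm_lt_one (hp : ‖p‖ < 1) (k : ℕ) : p * p ^ k ≠ 1 := by
  intro h
  have : ‖p‖ ^ (k + 1) < 1 := pow_lt_one₀ (norm_nonneg p) hp k.succ_ne_zero
  rw [← norm_pow, pow_succ', h, norm_one] at this
  exact this.false

lemma norm_sq_lt_one (hp : ‖p‖ < 1) : ‖p ^ 2‖ < 1 := by
  rw [norm_pow]; exact pow_lt_one₀ (norm_nonneg p) hp two_ne_zero

lemma summable_norm_mul_pow (a : K) (hp : ‖p‖ < 1) : Summable fun k : ℕ => ‖a * p ^ k‖ := by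
  simpa [norm_mul, norm_pow] using
    (summable_geometric_of_lt_one (norm_nonneg p) hp).mul_left ‖a‖

lemma qPochhammer_self_ne_zero (hp : ‖p‖ < 1) (n : ℕ) : qPochhammer p p n ≠ 0 :=
  prod_ne_zero_iff.2 fun k _ => sub_ne_zero.2 (mul_pow_ne_one_of_norm_lt_one hp k).symm

lemma qBinomial_add_eq_div (hp : ‖p‖ < 1) (m k : ℕ) :
    qBinomial p (m + k) k = qPochhammer p p (m + k) / (qPochhammer p p k * qPochhammer p p m) := by
  rw [eq_div_iff (mul_ne_zero (qPochhammer_self_ne_zero hp k) (qPochhammer_self_ne_zero hp m)),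
    ← mul_assoc, qBinomial_mul_qPochhammer_mul_qPochhammer]

variable [CompleteSpace K]

/-- `(a;p)_∞`. -/
noncomputable def qPochhammerInf (a p : K) : K := ∏' k : ℕ, (1 - a * p ^ k)

lemma multipliable_one_sub_mul_pow (a : K) (hp : ‖p‖ < 1) :
    Multipliable fun k : ℕ => 1 - a * p ^ k := by
  simpa [sub_eq_add_neg] using
    multipliable_one_add_of_summable (f := fun k : ℕ => -(a * p ^ k))
      (by simpa using summable_norm_mul_pow a hp)

lemma tendsto_qPochhammer (a : K) (hp : ‖p‖ < 1) :
    Tendsto (qPochhammer a p) atTop (𝓝 (qPochhammerInf a p)) :=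
  (multipliable_one_sub_mul_pow a hp).hasProd.tendsto_prod_nat

lemma qPochhammerInf_ne_zero (hp : ‖p‖ < 1) (ha : ∀ k, a * p ^ k ≠ 1) :
    qPochhammerInf a p ≠ 0 := by
  simpa [qPochhammerInf, sub_eq_add_neg] using
    tprod_one_add_ne_zero_of_summable (f := fun k : ℕ => -(a * p ^ k))
      (fun k => by rw [← sub_eq_add_neg, sub_ne_zero]; exact (ha k).symm)
      (by simpa using summable_norm_mul_pow a hp)

lemma qPochhammerInf_self_ne_zero (hp : ‖p‖ < 1) : qPochhammerInf p p ≠ 0 :=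
  qPochhammerInf_ne_zero hp (mul_pow_ne_one_of_norm_lt_one hp)

lemma qPochhammerInf_mul_qPochhammerInf_mul (a : K) (hp : ‖p‖ < 1) :
    qPochhammerInf a (p ^ 2) * qPochhammerInf (a * p) (p ^ 2) = qPochhammerInf a p := by
  have hp2 := norm_sq_lt_one hp
  have heven : (fun k => 1 - a * p ^ (2 * k)) = fun k => 1 - a * (p ^ 2) ^ k := by
    simp only [pow_mul]
  have hodd : (fun k => 1 - a * p ^ (2 * k + 1)) = fun k => 1 - a * p * (p ^ 2) ^ k := by
    funext k; ring
  unfold qPochhammerInf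
  rw [← tprod_even_mul_odd (f := fun k => 1 - a * p ^ k), heven, hodd]
  · rw [heven]; exact multipliable_one_sub_mul_pow a hp2
  · rw [hodd]; exact multipliable_one_sub_mul_pow (a * p) hp2

lemma qPochhammerInf_mul_qPochhammerInf_neg (a : K) (hp : ‖p‖ < 1) :
    qPochhammerInf a p * qPochhammerInf (-a) p = qPochhammerInf (a ^ 2) (p ^ 2) := by
  unfold qPochhammerInf
  rw [← (multipliable_one_sub_mul_pow a hp).tprod_mul (multipliable_one_sub_mul_pow (-a) hp)]
  exact tprod_congr fun k => by ring

lemma qPochhammerInf_sq_div_qPochhammerInf {q : K} (hq : ‖q‖ < 1) :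
    qPochhammerInf (q ^ 2) (q ^ 2) ^ 2 / qPochhammerInf q q =
      qPochhammerInf (q ^ 4) (q ^ 4) * qPochhammerInf (-q) (q ^ 2) := by
  have hq2 := norm_sq_lt_one hq
  have hA := qPochhammerInf_mul_qPochhammerInf_mul q hq
  have hB := qPochhammerInf_mul_qPochhammerInf_mul (q ^ 2) hq2
  have hE := qPochhammerInf_mul_qPochhammerInf_neg q hq2
  rw [← sq] at hA
  rw [← pow_mul, ← pow_add, show 2 * 2 = 4 from rfl] at hB
  rw [← pow_mul, show 2 * 2 = 4 from rfl] at hE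
  rw [div_eq_iff (qPochhammerInf_self_ne_zero hq)]
  linear_combination qPochhammerInf (q ^ 4) (q ^ 4) * qPochhammerInf (-q) (q ^ 2) * hA -
    qPochhammerInf (q ^ 2) (q ^ 2) * hB -
    qPochhammerInf (q ^ 2) (q ^ 2) * qPochhammerInf (q ^ 4) (q ^ 4) * hE

lemma tendsto_qBinomial {ι : Type*} {l : Filter ι} {m k : ι → ℕ} (hm : Tendsto m l atTop)
    (hk : Tendsto k l atTop) (hp : ‖p‖ < 1) :
    Tendsto (fun i => qBinomial p (m i + k i) (k i)) l (𝓝 (qPochhammerInf p p)⁻¹) := by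
  have hP := tendsto_qPochhammer p hp
  have hlim := (hP.comp (hm.atTop_add_atTop hk)).div ((hP.comp hk).mul (hP.comp hm))
    (mul_ne_zero (qPochhammerInf_self_ne_zero hp) (qPochhammerInf_self_ne_zero hp))
  rw [div_mul_cancel_right₀ (qPochhammerInf_self_ne_zero hp)] at hlim
  exact hlim.congr fun i => (qBinomial_add_eq_div hp (m i) (k i)).symm

lemma exists_norm_qBinomial_le (hp : ‖p‖ < 1) : ∃ C, ∀ n k, ‖qBinomial p n k‖ ≤ C := by
  have hP := tendsto_qPochhammer p hp
  obtain ⟨A, hA⟩ := isBounded_iff_forall_norm_le.1 (Metric.isBounded_range_of_tendsto _ hP)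
  obtain ⟨B, hB⟩ := isBounded_iff_forall_norm_le.1
    (Metric.isBounded_range_of_tendsto _ (hP.inv₀ (qPochhammerInf_self_ne_zero hp)))
  have hA' (n : ℕ) : ‖qPochhammer p p n‖ ≤ A := hA _ ⟨n, rfl⟩
  have hB' (n : ℕ) : ‖(qPochhammer p p n)⁻¹‖ ≤ B := hB _ ⟨n, rfl⟩
  have hA0 : 0 ≤ A := (norm_nonneg _).trans (hA' 0)
  have hB0 : 0 ≤ B := (norm_nonneg _).trans (hB' 0)
  refine ⟨A * B * B, fun n k => ?_⟩
  rcases le_or_gt k n with hkn | hnk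
  · obtain ⟨m, rfl⟩ := Nat.exists_eq_add_of_le' hkn
    rw [qBinomial_add_eq_div hp, div_eq_mul_inv, mul_inv, norm_mul, norm_mul, ← mul_assoc]
    gcongr
    exacts [hA' _, hB' _, hB' _]
  · rw [qBinomial_eq_zero_of_lt p hnk, norm_zero]
    positivity

end Analytic

section Jacobi

variable {K : Type*} [NormedField K] {q z : K}

lemma prod_range_pow_two_mul_add_one {M : Type*} [CommMonoid M] (q : M) (n : ℕ) :
    ∏ j ∈ range n, q ^ (2 * j + 1) = q ^ (n ^ 2) := by
  induction n with
  | zero => simp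
  | succ n ih => rw [prod_range_succ, ih, ← pow_add]; ring_nf

lemma summable_pow_mul_pow_sq (M : ℝ) {r : ℝ} (hr0 : 0 ≤ r) (hr : r < 1) :
    Summable fun n : ℕ => M ^ n * r ^ (n ^ 2) := by
  have hsmall : ∀ᶠ n : ℕ in atTop, |M| * r ^ n ≤ 2⁻¹ := by
    have := (tendsto_pow_atTop_nhds_zero_of_lt_one hr0 hr).const_mul |M|
    rw [mul_zero] at this
    exact this.eventually_le_const (by norm_num)
  refine summable_geometric_two.of_norm_bounded_eventually_nat ?_
  filter_upwards [hsmall] with n hn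
  rw [norm_mul, norm_pow, norm_pow, Real.norm_eq_abs, Real.norm_eq_abs, abs_of_nonneg hr0, sq,
    pow_mul, ← mul_pow, one_div]
  exact pow_le_pow_left₀ (by positivity) hn n

lemma summable_norm_zpow_mul_zpow_sq (z : K) (hq : ‖q‖ < 1) :
    Summable fun l : ℤ => ‖z ^ l * q ^ (l ^ 2)‖ := by
  apply Summable.of_nat_of_neg
  · refine (summable_pow_mul_pow_sq ‖z‖ (norm_nonneg q) hq).congr fun n => ?_
    rw [norm_mul, norm_zpow, norm_zpow, ← Int.natCast_pow, zpow_natCast, zpow_natCast]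
  · refine (summable_pow_mul_pow_sq ‖z‖⁻¹ (norm_nonneg q) hq).congr fun n => ?_
    rw [norm_mul, norm_zpow, norm_zpow, neg_sq, ← Int.natCast_pow, zpow_natCast, zpow_neg,
      zpow_natCast, inv_pow]

lemma sq_pow_choose_two_mul_pow_eq (hq : q ≠ 0) (hz : z ≠ 0) (n k : ℕ) :
    (q ^ 2) ^ k.choose 2 * (z⁻¹ * q ^ (1 - 2 * (n : ℤ))) ^ k =
      (z ^ n * q ^ (n ^ 2))⁻¹ * (z ^ ((n : ℤ) - k) * q ^ (((n : ℤ) - k) ^ 2)) := by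
  have hC : ((k.choose 2 : ℕ) : ℤ) * 2 = k * (k - 1) := by
    have : ((k.choose 2 : ℕ) : ℚ) * 2 = k * (k - 1) := by rw [Nat.cast_choose_two]; ring
    exact_mod_cast this
  have hz' : z ^ (-(k : ℤ)) = z ^ (-(n : ℤ)) * z ^ ((n : ℤ) - k) := by
    rw [← zpow_add₀ hz]; ring_nf
  have hq' : q ^ (((2 : ℕ) : ℤ) * (k.choose 2 : ℕ)) * q ^ ((1 - 2 * (n : ℤ)) * k) =
      q ^ (-((n ^ 2 : ℕ) : ℤ)) * q ^ (((n : ℤ) - k) ^ 2) := by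
    rw [← zpow_add₀ hq, ← zpow_add₀ hq]; congr 1; push_cast; linear_combination hC
  simp only [← zpow_natCast, mul_zpow, ← zpow_mul, inv_zpow', mul_inv, ← zpow_neg]
  rw [hz']
  linear_combination z ^ (-(n : ℤ)) * z ^ ((n : ℤ) - k) * hq'

lemma prod_range_two_mul_one_add_mul_pow (hq : q ≠ 0) (hz : z ≠ 0) (n : ℕ) :
    ∏ j ∈ range (2 * n), (1 + z⁻¹ * q ^ (1 - 2 * (n : ℤ)) * (q ^ 2) ^ j) =
      (z ^ n * q ^ (n ^ 2))⁻¹ *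
        (qPochhammer (-(z * q)) (q ^ 2) n * qPochhammer (-(z⁻¹ * q)) (q ^ 2) n) := by
  have hlow (j : ℕ) (hj : j < n) :
      1 + z⁻¹ * q ^ (1 - 2 * (n : ℤ)) * (q ^ 2) ^ (n - 1 - j) =
        (z * q ^ (2 * j + 1))⁻¹ * (1 - -(z * q) * (q ^ 2) ^ j) := by
    have hpow : q ^ (1 - 2 * (n : ℤ)) * (q ^ 2) ^ (n - 1 - j) = (q ^ (2 * j + 1))⁻¹ := by
      rw [← pow_mul, ← zpow_natCast, ← zpow_natCast, ← zpow_neg, ← zpow_add₀ hq]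
      congr 1; push_cast [Nat.cast_sub (by omega : j ≤ n - 1), Nat.cast_sub (by omega : 1 ≤ n)]
      ring
    rw [mul_assoc, hpow]
    field_simp
    ring
  have hhigh (i : ℕ) (hi : i < n) :
      1 + z⁻¹ * q ^ (1 - 2 * (n : ℤ)) * (q ^ 2) ^ (n + i) = 1 - -(z⁻¹ * q) * (q ^ 2) ^ i := by
    have hpow : q ^ (1 - 2 * (n : ℤ)) * (q ^ 2) ^ (n + i) = q * (q ^ 2) ^ i := by
      rw [← pow_mul, ← pow_mul, ← pow_succ', ← zpow_natCast, ← zpow_natCast, ← zpow_add₀ hq]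
      congr 1; push_cast; ring
    rw [mul_assoc, hpow]
    ring
  rw [two_mul, prod_range_add, ← prod_range_reflect _ n, prod_congr rfl fun j hj => hlow j
    (mem_range.1 hj), prod_congr rfl fun i hi => hhigh i (mem_range.1 hi), prod_mul_distrib,
    prod_inv_distrib, prod_mul_distrib, prod_const, card_range, prod_range_pow_two_mul_add_one,
    mul_assoc]
  rfl

theorem qPochhammer_mul_qPochhammer_eq_sum (hq : q ≠ 0) (hz : z ≠ 0) (n : ℕ) :
    qPochhammer (-(z * q)) (q ^ 2) n * qPochhammer (-(z⁻¹ * q)) (q ^ 2) n =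
      ∑ l ∈ Icc (-n : ℤ) n, qBinomial (q ^ 2) (2 * n) (n - l).toNat * (z ^ l * q ^ (l ^ 2)) := by
  have hcauchy := prod_range_one_add_mul_pow (q ^ 2) (z⁻¹ * q ^ (1 - 2 * (n : ℤ))) (2 * n)
  have hterm (k : ℕ) : (q ^ 2) ^ k.choose 2 * qBinomial (q ^ 2) (2 * n) k *
      (z⁻¹ * q ^ (1 - 2 * (n : ℤ))) ^ k = (z ^ n * q ^ (n ^ 2))⁻¹ *
        (qBinomial (q ^ 2) (2 * n) k * (z ^ ((n : ℤ) - k) * q ^ (((n : ℤ) - k) ^ 2))) := by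
    rw [mul_right_comm, sq_pow_choose_two_mul_pow_eq hq hz]
    ring
  rw [prod_range_two_mul_one_add_mul_pow hq hz, sum_congr rfl fun k _ => hterm k, ← mul_sum,
    mul_right_inj' (inv_ne_zero (mul_ne_zero (pow_ne_zero _ hz) (pow_ne_zero _ hq)))] at hcauchy
  rw [hcauchy]
  refine sum_nbij' (fun k : ℕ => (n : ℤ) - k) (fun l => (n - l).toNat) ?_ ?_ ?_ ?_ ?_ <;>
    intro a ha <;> simp only [mem_range, mem_Icc] at ha ⊢
  · omega
  · omega
  · omega
  · omega
  · rw [sub_sub_cancel, Int.toNat_natCast]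

variable [CompleteSpace K]

theorem jacobi_triple_product (hq : ‖q‖ < 1) (hq0 : q ≠ 0) (hz : z ≠ 0) :
    ∑' l : ℤ, z ^ l * q ^ (l ^ 2) =
      qPochhammerInf (q ^ 2) (q ^ 2) * qPochhammerInf (-(z * q)) (q ^ 2) *
        qPochhammerInf (-(z⁻¹ * q)) (q ^ 2) := by
  have hp := norm_sq_lt_one hq
  obtain ⟨C, hC⟩ := exists_norm_qBinomial_le hp
  set P := qPochhammerInf (q ^ 2) (q ^ 2)
  let f (n : ℕ) (l : ℤ) : K :=
    if l ∈ Icc (-n : ℤ) n then qBinomial (q ^ 2) (2 * n) (n - l).toNat * (z ^ l * q ^ (l ^ 2))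
    else 0
  have hfinite (n : ℕ) : ∑' l, f n l =
      qPochhammer (-(z * q)) (q ^ 2) n * qPochhammer (-(z⁻¹ * q)) (q ^ 2) n := by
    rw [qPochhammer_mul_qPochhammer_eq_sum hq0 hz, tsum_eq_sum fun l hl => if_neg hl]
    exact sum_congr rfl fun l hl => if_pos hl
  have hpointwise (l : ℤ) : Tendsto (f · l) atTop (𝓝 (P⁻¹ * (z ^ l * q ^ (l ^ 2)))) := by
    have hm : Tendsto (fun n : ℕ => ((n : ℤ) + l).toNat) atTop atTop :=
      tendsto_atTop_atTop.2 fun b => ⟨b + l.natAbs, fun n hn => by omega⟩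
    have hk : Tendsto (fun n : ℕ => ((n : ℤ) - l).toNat) atTop atTop :=
      tendsto_atTop_atTop.2 fun b => ⟨b + l.natAbs, fun n hn => by omega⟩
    refine ((tendsto_qBinomial hm hk hp).mul_const _).congr' ?_
    filter_upwards [eventually_ge_atTop l.natAbs] with n hn
    have hmem : l ∈ Icc (-n : ℤ) n := mem_Icc.2 ⟨by omega, by omega⟩
    simp only [f, if_pos hmem]
    congr 3
    omega
  have hbound (n : ℕ) (l : ℤ) : ‖f n l‖ ≤ C * ‖z ^ l * q ^ (l ^ 2)‖ := by
    simp only [f]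
    split_ifs
    · rw [norm_mul]; gcongr; exact hC _ _
    · rw [norm_zero]; exact mul_nonneg ((norm_nonneg _).trans (hC 0 0)) (norm_nonneg _)
  have hlim := tendsto_tsum_of_dominated_convergence
    ((summable_norm_zpow_mul_zpow_sq z hq).mul_left C) hpointwise (.of_forall hbound)
  simp only [hfinite, tsum_mul_left] at hlim
  have hprod := (tendsto_qPochhammer (-(z * q)) hp).mul (tendsto_qPochhammer (-(z⁻¹ * q)) hp)
  rw [mul_assoc, ← tendsto_nhds_unique hlim hprod, mul_inv_cancel_left₀
    (qPochhammerInf_self_ne_zero hp)]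

end Jacobi

/-- For `|q| < 1`, `∑_{k ∈ ℤ} q^{k(2k+1)} = (q²;q²)_∞² / (q;q)_∞`. -/
theorem stmt_3 (q : ℂ) (hq : ‖q‖ < 1) :
    ∑' k : ℤ, q ^ (k * (2 * k + 1)) =
      (∏' k : ℕ, (1 - q ^ 2 * (q ^ 2) ^ k)) ^ 2 / ∏' k : ℕ, (1 - q * q ^ k) := by
  rcases eq_or_ne q 0 with rfl | hq0
  · rw [tsum_eq_single 0 fun k hk => zero_zpow _ (mul_ne_zero hk (by omega))]
    simp
  have hterm (k : ℤ) : q ^ (k * (2 * k + 1)) = q ^ k * (q ^ 2) ^ (k ^ 2) := by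
    rw [← zpow_natCast, ← zpow_mul, ← zpow_add₀ hq0]; ring_nf
  have hodd := qPochhammerInf_mul_qPochhammerInf_mul (-q) (norm_sq_lt_one hq)
  rw [neg_mul] at hodd
  have hinv : q⁻¹ * q ^ 2 = q := by field_simp
  rw [tsum_congr hterm, jacobi_triple_product (norm_sq_lt_one hq) (pow_ne_zero 2 hq0) hq0, hinv,
    mul_assoc, mul_comm (qPochhammerInf (-(q * q ^ 2)) _), hodd, ← pow_mul]
  exact (qPochhammerInf_sq_div_qPochhammerInf hq).symm
end

section
/- For |q|<1 and n ∈ ℤ, define A_n := ∑_{k∈ℤ} q^{k^2+(n-k)(n-k+1)}/(1-q^{2k-1}). Then A_{-n} = -A_n for all n ∈ ℤ; in particular A_0 = 0. -/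
/-!
The substitution `k ↦ 1 - k` turns the exponent of the `k`-th term of `A (-n)` into that of
`A n` shifted by `-(2k - 1)`, and `a⁻¹ / (1 - a⁻¹) = -1 / (1 - a)` for `a = q ^ (2k - 1)`.
So the two series agree term by term up to sign after reindexing.
-/

theorem inv_mul_div_one_sub_inv {K : Type*} [Field K] {a : K} (ha : a ≠ 0) (x : K) :
    a⁻¹ * x / (1 - a⁻¹) = -(x / (1 - a)) := by
  have h : 1 - a⁻¹ = -(1 - a) * a⁻¹ := by field_simp; ring
  rw [h, mul_comm a⁻¹ x, mul_div_mul_right _ _ (inv_ne_zero ha), div_neg]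

theorem zpow_div_one_sub_zpow_reflect {q : ℂ} (hq0 : q ≠ 0) (n k : ℤ) :
    q ^ ((1 - k) ^ 2 + (-n - (1 - k)) * (-n - (1 - k) + 1)) / (1 - q ^ (2 * (1 - k) - 1)) =
      -(q ^ (k ^ 2 + (n - k) * (n - k + 1)) / (1 - q ^ (2 * k - 1))) := by
  have hexp : (1 - k) ^ 2 + (-n - (1 - k)) * (-n - (1 - k) + 1) =
      -(2 * k - 1) + (k ^ 2 + (n - k) * (n - k + 1)) := by ring
  rw [hexp, show 2 * (1 - k) - 1 = -(2 * k - 1) by ring, zpow_add₀ hq0, zpow_neg]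
  exact inv_mul_div_one_sub_inv (zpow_ne_zero _ hq0) _

theorem stmt_4_general (q : ℂ) (hq0 : q ≠ 0)
    (A : ℤ → ℂ)
    (hA : ∀ n : ℤ, A n = ∑' k : ℤ, q ^ (k ^ 2 + (n - k) * (n - k + 1)) / (1 - q ^ (2 * k - 1))) :
    (∀ n : ℤ, A (-n) = -A n) ∧ A 0 = 0 := by
  have hodd : ∀ n : ℤ, A (-n) = -A n := by
    intro n
    rw [hA, hA, ← tsum_neg, ← (Equiv.subLeft (1 : ℤ)).tsum_eq]
    exact tsum_congr fun k => zpow_div_one_sub_zpow_reflect hq0 n k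
  refine ⟨hodd, ?_⟩
  have h0 := hodd 0
  rw [neg_zero] at h0
  linear_combination h0 / 2

/-- For `0 < |q| < 1` with `1 - q^{2k-1} ≠ 0` for all `k ∈ ℤ`, the series
`A n := ∑_{k ∈ ℤ} q^{k² + (n-k)(n-k+1)} / (1 - q^{2k-1})` satisfies
`A (-n) = -A n` for all `n ∈ ℤ`; in particular `A 0 = 0`. -/
theorem stmt_4 (q : ℂ) (hq0 : q ≠ 0) (hq : ‖q‖ < 1)
    (hden : ∀ k : ℤ, 1 - q ^ (2 * k - 1) ≠ 0)
    (A : ℤ → ℂ)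
    (hA : ∀ n : ℤ, A n = ∑' k : ℤ, q ^ (k ^ 2 + (n - k) * (n - k + 1)) / (1 - q ^ (2 * k - 1))) :
    (∀ n : ℤ, A (-n) = -A n) ∧ A 0 = 0 :=
  stmt_4_general q hq0 A hA
end

section
/- Let P(n) be the number of strongly unimodal compositions of n with successive parts differing by exactly 1, i.e., the number of triples (x,y,z) with 1 ≤ x ≤ y, 1 ≤ z ≤ y, and n = y^2 - x(x-1)/2 - z(z-1)/2. Then for |q|<1, ∑_{n≥1} P(n)q^n = ∑_{m≥0} ∑_{u=-m}^{m} q^{(m+1)^2-u^2}/(1-q^{2m+1}). -/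
/-!
Write `x = a + 1`, `z = b + 1`. Taking `2b + 1` and `2a + 1` to be, up to sign, the real and
imaginary parts of `(1 + i)(2k + 1 + 2ui)` gives a bijection `(u, k) ↦ (a, b)` from `ℤ × ℕ` onto
`ℕ × ℕ`, under which `a(a+1)/2 + b(b+1)/2 = u² + k(k+1)` and `max a b = |u| + k`. Putting
`y = m + k + 1`, the triples counted by `P(n)` become the `(m, u, k)` with `|u| ≤ m` and
`n = (m+1)² - u² + k(2m+1)`, and summing over `k` is the geometric series giving
`1 / (1 - q^(2m+1))`.
-/

/-- `P n` counts strongly unimodal compositions of `n` with successive parts differing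
by exactly 1: triples `(x, y, z)` with `1 ≤ x ≤ y`, `1 ≤ z ≤ y`,
`n = y² - x(x-1)/2 - z(z-1)/2`. -/
noncomputable def Pcount (n : ℕ) : ℕ :=
  Nat.card {p : ℤ × ℤ × ℤ //
    1 ≤ p.1 ∧ p.1 ≤ p.2.1 ∧ 1 ≤ p.2.2 ∧ p.2.2 ≤ p.2.1 ∧
      (n : ℤ) = p.2.1 ^ 2 - p.1 * (p.1 - 1) / 2 - p.2.2 * (p.2.2 - 1) / 2}

theorem hasSum_natCard_fiber_nsmul {ι α : Type*} [AddCommGroup α] [UniformSpace α]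
    [IsUniformAddGroup α] [CompleteSpace α] [T2Space α] (w : ι → ℕ) (f : ℕ → α)
    (hf : Summable (f ∘ w)) :
    HasSum (fun n => Nat.card {i // w i = n} • f n) (∑' i, f (w i)) := by
  convert hf.hasSum.tsum_fiberwise w using 1
  · funext n
    rw [Function.comp_def, tsum_congr fun i : w ⁻¹' {n} => congrArg f i.2, tsum_const]
    rfl
  · rfl

theorem summable_pow_natAbs {r : ℝ} (hr0 : 0 ≤ r) (hr1 : r < 1) :
    Summable fun u : ℤ => r ^ u.natAbs :=
  .of_nat_of_neg (by simpa using summable_geometric_of_lt_one hr0 hr1)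
    (by simpa using summable_geometric_of_lt_one hr0 hr1)

theorem sq_two_mul_natAbs_div_two_add_one {t : ℤ} (ht : t % 2 = 1) :
    (2 * (t.natAbs / 2 : ℕ) + 1 : ℤ) ^ 2 = t ^ 2 := by
  rw [show (2 * (t.natAbs / 2 : ℕ) + 1 : ℤ) = t.natAbs by omega, Int.natAbs_sq]

namespace StronglyUnimodal

def pairEquiv : ℤ × ℕ ≃ ℕ × ℕ where
  toFun p := ((2 * p.1 + 2 * p.2 + 1).natAbs / 2, (2 * p.2 + 1 - 2 * p.1).natAbs / 2)
  invFun q :=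
    if (q.1 + q.2) % 2 = 0 then (((q.1 : ℤ) - q.2) / 2, (q.1 + q.2) / 2)
    else if q.2 < q.1 then (((q.1 + q.2 + 1) / 2 : ℕ), (q.1 - q.2 - 1) / 2)
    else (-((q.1 + q.2 + 1) / 2 : ℕ), (q.2 - q.1 - 1) / 2)
  left_inv p := by
    obtain ⟨u, k⟩ := p
    dsimp only
    split_ifs <;> simp only [Prod.mk.injEq] <;> omega
  right_inv q := by
    obtain ⟨a, b⟩ := q
    dsimp only
    split_ifs <;> simp only [Prod.mk.injEq] <;> omega

theorem pairEquiv_max (p : ℤ × ℕ) :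
    max (pairEquiv p).1 (pairEquiv p).2 = p.1.natAbs + p.2 := by
  simp only [pairEquiv, Equiv.coe_fn_mk]
  omega

theorem pairEquiv_triangle (p : ℤ × ℕ) :
    ((pairEquiv p).1 : ℤ) * ((pairEquiv p).1 + 1) + (pairEquiv p).2 * ((pairEquiv p).2 + 1) =
      2 * (p.1 ^ 2 + p.2 * (p.2 + 1)) := by
  obtain ⟨u, k⟩ := p
  simp only [pairEquiv, Equiv.coe_fn_mk]
  have ha := sq_two_mul_natAbs_div_two_add_one (t := 2 * u + 2 * k + 1) (by omega)
  have hb := sq_two_mul_natAbs_div_two_add_one (t := 2 * k + 1 - 2 * u) (by omega)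
  linarith

def indexSet : Set (ℕ × ℤ × ℕ) := {s | s.2.1.natAbs ≤ s.1}

def exponent (s : ℕ × ℤ × ℕ) : ℕ :=
  (((s.1 : ℤ) + 1) ^ 2 - s.2.1 ^ 2).toNat + s.2.2 * (2 * s.1 + 1)

theorem natCast_exponent {s : ℕ × ℤ × ℕ} (hs : s ∈ indexSet) :
    (exponent s : ℤ) = ((s.1 : ℤ) + 1) ^ 2 - s.2.1 ^ 2 + s.2.2 * (2 * s.1 + 1) := by
  have hu : s.2.1 ^ 2 ≤ ((s.1 : ℤ) + 1) ^ 2 := by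
    rw [← Int.natAbs_sq]; have : s.2.1.natAbs ≤ s.1 := hs; gcongr; omega
  simp only [exponent]
  push_cast
  rw [Int.toNat_of_nonneg (by linarith)]

theorem sq_sub_triangle_sub_triangle {x z m u k : ℤ}
    (h : x * (x - 1) + z * (z - 1) = 2 * (u ^ 2 + k * (k + 1))) :
    (m + k + 1) ^ 2 - x * (x - 1) / 2 - z * (z - 1) / 2 =
      (m + 1) ^ 2 - u ^ 2 + k * (2 * m + 1) := by
  obtain ⟨X, hX⟩ := (Int.even_mul_pred_self x).two_dvd
  obtain ⟨Z, hZ⟩ := (Int.even_mul_pred_self z).two_dvd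
  rw [hX, hZ, Int.mul_ediv_cancel_left _ two_ne_zero, Int.mul_ediv_cancel_left _ two_ne_zero]
  linarith

def IsTriple (n : ℕ) (p : ℤ × ℤ × ℤ) : Prop :=
  1 ≤ p.1 ∧ p.1 ≤ p.2.1 ∧ 1 ≤ p.2.2 ∧ p.2.2 ≤ p.2.1 ∧
    (n : ℤ) = p.2.1 ^ 2 - p.1 * (p.1 - 1) / 2 - p.2.2 * (p.2.2 - 1) / 2

theorem mem_indexSet {s : ℕ × ℤ × ℕ} : s ∈ indexSet ↔ s.2.1.natAbs ≤ s.1 := Iff.rfl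

def toTriple (s : ℕ × ℤ × ℕ) : ℤ × ℤ × ℤ :=
  ((pairEquiv s.2).1 + 1, s.1 + s.2.2 + 1, (pairEquiv s.2).2 + 1)

theorem toTriple_injective : Function.Injective toTriple := by
  rintro ⟨m, uk⟩ ⟨m', uk'⟩ h
  simp only [toTriple, Prod.mk.injEq, add_left_inj, Nat.cast_inj] at h
  have huk : uk = uk' := pairEquiv.injective (Prod.ext h.1 h.2.2)
  subst huk
  simp only [Prod.mk.injEq, and_true]; omega

theorem exists_toTriple_eq {x y z : ℤ} (hx : 1 ≤ x) (hxy : x ≤ y) (hz : 1 ≤ z) (hzy : z ≤ y) :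
    ∃ s, toTriple s = (x, y, z) := by
  set uk := pairEquiv.symm ((x - 1).toNat, (z - 1).toNat)
  have hab : pairEquiv uk = ((x - 1).toNat, (z - 1).toNat) := pairEquiv.apply_symm_apply _
  have hmax := pairEquiv_max uk
  rw [hab] at hmax
  refine ⟨((y - 1 - uk.2).toNat, uk), ?_⟩
  simp only [toTriple, hab, Prod.mk.injEq]
  omega

theorem isTriple_toTriple_iff (n : ℕ) (s : ℕ × ℤ × ℕ) :
    IsTriple n (toTriple s) ↔ s ∈ indexSet ∧ exponent s = n := by
  obtain ⟨m, u, k⟩ := s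
  have hmax := pairEquiv_max (u, k)
  have htri := pairEquiv_triangle (u, k)
  simp only [IsTriple, toTriple, mem_indexSet]
  generalize (pairEquiv (u, k)).1 = a, (pairEquiv (u, k)).2 = b at hmax htri ⊢
  have hw := sq_sub_triangle_sub_triangle (x := a + 1) (z := b + 1) (m := m) (u := u) (k := k)
    (by linear_combination htri)
  constructor
  · rintro ⟨-, hxy, -, hzy, hn⟩
    have hs : u.natAbs ≤ m := by omega
    have := natCast_exponent (s := (m, u, k)) hs
    push_cast at hn this ⊢
    exact ⟨hs, by omega⟩
  · rintro ⟨hs, hn⟩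
    have := natCast_exponent (s := (m, u, k)) hs
    push_cast at this ⊢
    refine ⟨by omega, by omega, by omega, by omega, by omega⟩

theorem pcount_eq_natCard (n : ℕ) : Pcount n = Nat.card {s : indexSet // exponent s = n} := by
  have himage : {p | IsTriple n p} = toTriple '' {s | s ∈ indexSet ∧ exponent s = n} := by
    ext p
    constructor
    · intro hp
      obtain ⟨s, hs⟩ := exists_toTriple_eq hp.1 hp.2.1 hp.2.2.1 hp.2.2.2.1
      exact ⟨s, (isTriple_toTriple_iff n s).1 (hs ▸ hp), hs⟩
    · rintro ⟨s, hs, rfl⟩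
      exact (isTriple_toTriple_iff n s).2 hs
  change Nat.card {p | IsTriple n p} = _
  rw [himage, Nat.card_image_of_injective toTriple_injective]
  exact Nat.card_congr (Equiv.subtypeSubtypeEquivSubtypeInter _ _).symm

theorem lt_exponent {s : ℕ × ℤ × ℕ} (hs : s ∈ indexSet) :
    s.1 + s.2.1.natAbs + s.2.2 < exponent s := by
  have h := natCast_exponent hs
  rw [mem_indexSet] at hs
  obtain ⟨m, u, k⟩ := s
  dsimp only at h hs ⊢
  have hu : (u.natAbs : ℤ) ^ 2 = u ^ 2 := Int.natAbs_sq u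
  have hv : (u.natAbs : ℤ) ≤ m := by exact_mod_cast hs
  have hsq : (m : ℤ) + 1 + u.natAbs ≤ (m + 1) ^ 2 - u.natAbs ^ 2 := by nlinarith
  have hk : (k : ℤ) ≤ k * (2 * m + 1) := by nlinarith
  omega

theorem pcount_zero : Pcount 0 = 0 := by
  rw [pcount_eq_natCard, Nat.card_eq_zero]
  exact Or.inl ⟨fun s => by have := lt_exponent s.1.2; omega⟩

theorem summable_indicator_pow_exponent {q : ℂ} (hq : ‖q‖ < 1) :
    Summable (indexSet.indicator fun s => q ^ exponent s) := by
  have hr0 : 0 ≤ ‖q‖ := norm_nonneg q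
  have hgeom := summable_geometric_of_lt_one hr0 hq
  have hbound : Summable fun s : ℕ × ℤ × ℕ => ‖q‖ ^ s.1 * (‖q‖ ^ s.2.1.natAbs * ‖q‖ ^ s.2.2) :=
    hgeom.mul_of_nonneg ((summable_pow_natAbs hr0 hq).mul_of_nonneg hgeom
      (fun _ => by positivity) (fun _ => by positivity)) (fun _ => by positivity)
      (fun _ => by positivity)
  refine .of_norm_bounded hbound fun s => ?_
  by_cases hs : s ∈ indexSet
  · rw [Set.indicator_of_mem hs, norm_pow, ← pow_add, ← pow_add]
    exact pow_le_pow_of_le_one hr0 hq.le (by have := lt_exponent hs; omega)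
  · rw [Set.indicator_of_notMem hs, norm_zero]
    positivity

theorem tsum_indicator_pow_exponent {q : ℂ} (hq : ‖q‖ < 1) (m : ℕ) :
    ∑' p : ℤ × ℕ, indexSet.indicator (fun s => q ^ exponent s) (m, p) =
      ∑ u ∈ Finset.Icc (-(m : ℤ)) m, q ^ (((m : ℤ) + 1) ^ 2 - u ^ 2) / (1 - q ^ (2 * m + 1)) := by
  rw [((summable_indicator_pow_exponent hq).prod_factor m).tsum_prod,
    tsum_eq_sum (s := Finset.Icc (-(m : ℤ)) m)]
  · refine Finset.sum_congr rfl fun u hu => ?_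
    have hs : ∀ k : ℕ, (m, u, k) ∈ indexSet := fun k => by
      rw [Finset.mem_Icc] at hu; show u.natAbs ≤ m; omega
    have hsq : 0 ≤ ((m : ℤ) + 1) ^ 2 - u ^ 2 := by
      have := natCast_exponent (hs 0); push_cast at this; omega
    have hterm : ∀ k : ℕ, indexSet.indicator (fun s => q ^ exponent s) (m, u, k) =
        q ^ (((m : ℤ) + 1) ^ 2 - u ^ 2).toNat * (q ^ (2 * m + 1)) ^ k := fun k => by
      rw [Set.indicator_of_mem (hs k), exponent, pow_add, pow_mul']
    have hratio : ‖q ^ (2 * m + 1)‖ < 1 := by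
      rw [norm_pow]; exact pow_lt_one₀ (norm_nonneg q) hq (by omega)
    rw [tsum_congr hterm, tsum_mul_left, tsum_geometric_of_norm_lt_one hratio, ← zpow_natCast,
      Int.toNat_of_nonneg hsq, div_eq_mul_inv]
  · intro u hu
    have hs : ∀ k : ℕ, (m, u, k) ∉ indexSet := fun k => by
      rw [Finset.mem_Icc] at hu; show ¬u.natAbs ≤ m; omega
    simp only [Set.indicator_of_notMem (hs _), tsum_zero]

end StronglyUnimodal

open StronglyUnimodal in
/-- For `|q| < 1`:
`∑_{n≥1} P(n) qⁿ = ∑_{m≥0} ∑_{u=-m}^{m} q^{(m+1)²-u²}/(1-q^{2m+1})`. -/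
theorem stmt_16 (q : ℂ) (hq : ‖q‖ < 1) :
    ∑' n : ℕ, (Pcount (n + 1) : ℂ) * q ^ (n + 1) =
      ∑' m : ℕ, ∑ u ∈ Finset.Icc (-(m : ℤ)) (m : ℤ),
        q ^ (((m : ℤ) + 1) ^ 2 - u ^ 2) / (1 - q ^ (2 * m + 1)) := by
  have hsum := summable_indicator_pow_exponent hq
  have hsub : Summable fun s : indexSet => q ^ exponent s :=
    (summable_subtype_iff_indicator (s := indexSet) (f := fun s => q ^ exponent s)).2 hsum
  have hfib := hasSum_natCard_fiber_nsmul (fun s : indexSet => exponent s) (q ^ ·) hsub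
  have hcoeff : (fun n => Nat.card {s : indexSet // exponent s = n} • q ^ n) =
      fun n => (Pcount n : ℂ) * q ^ n := by
    funext n; rw [pcount_eq_natCard, nsmul_eq_mul]
  rw [hcoeff] at hfib
  calc ∑' n : ℕ, (Pcount (n + 1) : ℂ) * q ^ (n + 1)
      = ∑' n : ℕ, (Pcount n : ℂ) * q ^ n := by
        rw [hfib.summable.tsum_eq_zero_add, pcount_zero, Nat.cast_zero, zero_mul, zero_add]
    _ = ∑' s, indexSet.indicator (fun s => q ^ exponent s) s := by
        rw [hfib.tsum_eq]; exact tsum_subtype indexSet fun s => q ^ exponent s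
    _ = _ := by rw [hsum.tsum_prod]; exact tsum_congr (tsum_indicator_pow_exponent hq)
end

section
/- Let P(n) := #{(x,y,z): 1≤x≤y, 1≤z≤y, n = y^2 - x(x-1)/2 - z(z-1)/2} and Q(n) := #{(l,m,k): l≥1, 1≤m≤l, k≥0, n = l(l+1)/2 - m(m-1)/2 + kl}. Then Q(n) = P(2n) for all positive integers n. -/
/-- `Q n` counts triples `(l, m, k)` with `l ≥ 1`, `1 ≤ m ≤ l`, `k ≥ 0`,
`n = l(l+1)/2 - m(m-1)/2 + k·l`. -/
noncomputable def Qcount (n : ℕ) : ℕ :=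
  Nat.card {p : ℤ × ℤ × ℤ //
    1 ≤ p.1 ∧ 1 ≤ p.2.1 ∧ p.2.1 ≤ p.1 ∧ 0 ≤ p.2.2 ∧
      (n : ℤ) = p.1 * (p.1 + 1) / 2 - p.2.1 * (p.2.1 - 1) / 2 + p.2.2 * p.1}

def qForm (q : ℤ × ℤ × ℤ) : ℤ :=
  q.1 * (q.1 + 1) - q.2.1 * (q.2.1 - 1) + 2 * (q.2.2 * q.1)

def pForm (p : ℤ × ℤ × ℤ) : ℤ :=
  2 * p.2.1 ^ 2 - p.1 * (p.1 - 1) - p.2.2 * (p.2.2 - 1)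

def QAdmissible (q : ℤ × ℤ × ℤ) : Prop :=
  1 ≤ q.1 ∧ 1 ≤ q.2.1 ∧ q.2.1 ≤ q.1 ∧ 0 ≤ q.2.2

def PAdmissible (p : ℤ × ℤ × ℤ) : Prop :=
  1 ≤ p.1 ∧ p.1 ≤ p.2.1 ∧ 1 ≤ p.2.2 ∧ p.2.2 ≤ p.2.1

def qTriples (n : ℕ) : Set (ℤ × ℤ × ℤ) := {q | QAdmissible q ∧ qForm q = 2 * n}

def pTriples (N : ℕ) : Set (ℤ × ℤ × ℤ) := {p | PAdmissible p ∧ pForm p = 2 * N}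

lemma eq_half_sub_half_add_iff {n u v w : ℤ} (hu : Even u) (hv : Even v) :
    n = u / 2 - v / 2 + w ↔ u - v + 2 * w = 2 * n := by
  obtain ⟨u, rfl⟩ := hu
  obtain ⟨v, rfl⟩ := hv
  omega

lemma eq_sub_half_sub_half_iff {n u v w : ℤ} (hu : Even u) (hv : Even v) :
    n = w - u / 2 - v / 2 ↔ 2 * w - u - v = 2 * n := by
  obtain ⟨u, rfl⟩ := hu
  obtain ⟨v, rfl⟩ := hv
  omega

lemma Qcount_eq_card (n : ℕ) : Qcount n = Nat.card (qTriples n) :=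
  Nat.card_congr <| Equiv.subtypeEquivRight fun q => by
    simp only [qTriples, QAdmissible, qForm, Set.mem_ofPred_eq, and_assoc,
      eq_half_sub_half_add_iff (Int.even_mul_succ_self _) (Int.even_mul_pred_self _)]

lemma Pcount_eq_card (N : ℕ) : Pcount N = Nat.card (pTriples N) :=
  Nat.card_congr <| Equiv.subtypeEquivRight fun p => by
    simp only [pTriples, PAdmissible, pForm, Set.mem_ofPred_eq, and_assoc,
      eq_sub_half_sub_half_iff (Int.even_mul_pred_self _) (Int.even_mul_pred_self _)]

def qToP : ℤ × ℤ × ℤ → ℤ × ℤ × ℤ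
  | (l, m, k) =>
    let L := l / 2
    if l % 2 = 0 then
      if 3 * L + k + 2 ≤ 2 * m then (2 * m - 3 * L - k - 1, 3 * L - m + k + 1, L - k)
      else if k < L then (L - k, 3 * L - m + k + 1, 3 * L - 2 * m + k + 2)
      else if m ≤ L then (k + 1 - L, 3 * L - m + k + 1, 3 * L - 2 * m + k + 2)
      else (3 * L - 2 * m + k + 2, 3 * L - m + k + 1, k + 1 - L)
    else
      if 6 * L + 4 * k + 7 < 4 * m then
        (L + 2 * k + 2, 3 * L - m + 2 * k + 3, 2 * m - 3 * L - 2 * k - 3)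
      else (L + 2 * k + 2, 3 * L - m + 2 * k + 3, 3 * L - 2 * m + 2 * k + 4)

/- `(x, z) = (a + b, a - b)` and `y = b + 2t` when `x + z` is even, `(x, z) = (a + b + 1, a - b)`
and `y = a + 2t` when it is odd; `t` is exact by `parity_of_four_dvd_pForm`. -/
def pToQ : ℤ × ℤ × ℤ → ℤ × ℤ × ℤ
  | (x, y, z) =>
    let a := (x + z) / 2
    let b := (x - z) / 2
    if (x + z) % 2 = 0 then
      let t := (y - b) / 2
      if a ≤ t then (2 * (b + t), 2 * (b + t) - a + 1, t - a)
      else (2 * (b + 2 * t - a) + 1, 2 * (b + t) - a + 1, a - t - 1)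
    else
      let t := (y - a) / 2
      if b < 0 then
        if -b ≤ t then (2 * (a + t), 2 * (a + t) + b + 1, t + b)
        else (2 * t, 2 * t + b + 1, a + t + b)
      else
        if b < t then (2 * t, 2 * t - b, a + t - b - 1)
        else (2 * (a + 2 * t - b) - 1, 2 * (a + t) - b, b - t)

lemma pForm_qToP (q : ℤ × ℤ × ℤ) : pForm (qToP q) = 2 * qForm q := by
  obtain ⟨l, m, k⟩ := q
  obtain ⟨L, rfl | rfl⟩ := Int.even_or_odd' l
  · have hmod : 2 * L % 2 = 0 := by omega
    have hdiv : 2 * L / 2 = L := by omega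
    simp only [qToP, hmod, hdiv, if_true]
    split_ifs <;> simp only [pForm, qForm] <;> ring
  · have hmod : (2 * L + 1) % 2 = 1 := by omega
    have hdiv : (2 * L + 1) / 2 = L := by omega
    simp only [qToP, hmod, hdiv, one_ne_zero, if_false]
    split_ifs <;> simp only [pForm, qForm] <;> ring

lemma pAdmissible_qToP {q : ℤ × ℤ × ℤ} (hq : QAdmissible q) : PAdmissible (qToP q) := by
  obtain ⟨l, m, k⟩ := q
  obtain ⟨hl, hm, hml, hk⟩ : 1 ≤ l ∧ 1 ≤ m ∧ m ≤ l ∧ 0 ≤ k := hq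
  simp only [qToP]
  split_ifs <;> simp only [PAdmissible] <;> omega

lemma pToQ_qToP {q : ℤ × ℤ × ℤ} (hq : QAdmissible q) : pToQ (qToP q) = q := by
  obtain ⟨l, m, k⟩ := q
  obtain ⟨hl, hm, hml, hk⟩ : 1 ≤ l ∧ 1 ≤ m ∧ m ≤ l ∧ 0 ≤ k := hq
  simp only [qToP]
  split_ifs <;> simp only [pToQ] <;> split_ifs <;> simp only [Prod.mk.injEq] <;> omega

lemma even_sub_of_even_sq_sub_sq {y c : ℤ} (h : Even (y ^ 2 - c ^ 2)) : Even (y - c) := by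
  simpa [Int.even_sub, Int.even_pow] using h

lemma parity_of_four_dvd_pForm {x y z : ℤ} (h : 4 ∣ pForm (x, y, z)) :
    (x + z) % 2 = 0 ∧ (2 * y - x + z) % 4 = 0 ∨
      (x + z) % 2 = 1 ∧ (2 * y - x - z + 1) % 4 = 0 := by
  obtain ⟨n, hn⟩ := h
  simp only [pForm] at hn
  rcases Int.emod_two_eq_zero_or_one (x + z) with hxz | hxz
  · obtain ⟨a, b, rfl, rfl⟩ : ∃ a b, x = a + b ∧ z = a - b :=
      ⟨(x + z) / 2, (x - z) / 2, by omega, by omega⟩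
    obtain ⟨c, hc⟩ := Int.even_mul_pred_self a
    obtain ⟨t, ht⟩ := even_sub_of_even_sq_sub_sq (y := y) (c := b) ⟨n + c, by linarith⟩
    omega
  · obtain ⟨a, b, rfl, rfl⟩ : ∃ a b, x = a + b + 1 ∧ z = a - b :=
      ⟨(x + z) / 2, (x - z) / 2, by omega, by omega⟩
    obtain ⟨c, hc⟩ := Int.even_mul_succ_self b
    obtain ⟨t, ht⟩ := even_sub_of_even_sq_sub_sq (y := y) (c := a) ⟨n + c, by linarith⟩
    omega

lemma qAdmissible_pToQ {p : ℤ × ℤ × ℤ} (hp : PAdmissible p) (h4 : 4 ∣ pForm p) :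
    QAdmissible (pToQ p) := by
  obtain ⟨x, y, z⟩ := p
  have hpar := parity_of_four_dvd_pForm h4
  obtain ⟨hx, hxy, hz, hzy⟩ : 1 ≤ x ∧ x ≤ y ∧ 1 ≤ z ∧ z ≤ y := hp
  simp only [pToQ]
  split_ifs <;> simp only [QAdmissible] <;> omega

lemma qToP_pToQ {p : ℤ × ℤ × ℤ} (hp : PAdmissible p) (h4 : 4 ∣ pForm p) :
    qToP (pToQ p) = p := by
  obtain ⟨x, y, z⟩ := p
  have hpar := parity_of_four_dvd_pForm h4
  obtain ⟨hx, hxy, hz, hzy⟩ : 1 ≤ x ∧ x ≤ y ∧ 1 ≤ z ∧ z ≤ y := hp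
  simp only [pToQ]
  split_ifs <;> simp only [qToP] <;> split_ifs <;> simp only [Prod.mk.injEq] <;> omega

lemma four_dvd_pForm_of_mem {n : ℕ} {p : ℤ × ℤ × ℤ} (hp : p ∈ pTriples (2 * n)) :
    4 ∣ pForm p :=
  ⟨n, by rw [hp.2]; push_cast; ring⟩

lemma mapsTo_qToP (n : ℕ) : Set.MapsTo qToP (qTriples n) (pTriples (2 * n)) := by
  rintro q ⟨hq, hform⟩
  refine ⟨pAdmissible_qToP hq, ?_⟩
  rw [pForm_qToP, hform]
  push_cast
  ring

lemma mapsTo_pToQ (n : ℕ) : Set.MapsTo pToQ (pTriples (2 * n)) (qTriples n) := by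
  rintro p hmem
  have h4 := four_dvd_pForm_of_mem hmem
  obtain ⟨hp, hform⟩ := hmem
  refine ⟨qAdmissible_pToQ hp h4, ?_⟩
  have h := pForm_qToP (pToQ p)
  rw [qToP_pToQ hp h4, hform] at h
  push_cast at h
  linarith

lemma invOn_pToQ_qToP (n : ℕ) : Set.InvOn pToQ qToP (qTriples n) (pTriples (2 * n)) :=
  ⟨fun _ hq => pToQ_qToP hq.1,
    fun _ hp => qToP_pToQ hp.1 (four_dvd_pForm_of_mem hp)⟩

theorem stmt_19_general (n : ℕ) : Qcount n = Pcount (2 * n) := by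
  rw [Qcount_eq_card, Pcount_eq_card]
  exact Nat.card_congr <|
    ((invOn_pToQ_qToP n).bijOn (mapsTo_qToP n) (mapsTo_pToQ n)).equiv qToP

/-- `Q(n) = P(2n)` for all positive integers `n`. -/
theorem stmt_19 (n : ℕ) (hn : 0 < n) : Qcount n = Pcount (2 * n) :=
  stmt_19_general n
end
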